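/- Let I ⊆ ℝ be an open interval, k ≥ 1 an integer, a : I → ℂ differentiable, and A_1, …, A_{k+1} : I → M_2(ℂ) differentiable matrix functions with tr A_j(λ) = 0 for all λ ∈ I; set A_{k+2} ≡ 0. Put B_0(λ) = [[0, 1],[2a'(λ), 0]] and σ₋ = [[0,0],[1,0]], and suppose the zero-curvature relations A_j'(λ) + [A_j(λ), B_0(λ)] + [A_{j+1}(λ), σ₋] = 0 hold on I for j = 1, …, k+1, where [P,Q] = PQ − QP. Define b_j := (A_j)_{12} for 1 ≤ j ≤ k+1 and b_{k+2} ≡ 0. Then for each j = 1, …, k+1: (i) b_j' = −2(A_j)_{11} on I (in particular each b_j is twice differentiable); (ii) A_j = [[ −b_j'/2, b_j ],[ −b_j''/2 + 2a' b_j + b_{j+1}, b_j'/2 ]]; and (iii) (A_j)_{21}' − 4a'(A_j)_{11} + b_{j+1}' = 0 on I. -/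

import Mathlib

/-!
Read entrywise, the zero-curvature relation for `A_j` is a system of four scalar equations. Its
(1,2) entry together with `tr A_j = 0` gives `b_j' = -2 (A_j)₁₁` on the open set `I`, so `b_j'`
is differentiable with `b_j'' = -2 (A_j)₁₁'`; the (1,1) entry then expresses `(A_j)₂₁`. The (2,1)
entry, combined with the same identity for `b_{j+1}` (trivial for `j = k + 1`, as `A_{k+2} = 0`),
gives (iii).
-/

open Matrix

theorem zeroCurvature_fin_two_iff {R : Type*} [CommRing R] (D A N : Matrix (Fin 2) (Fin 2) R)
    (c : R) :
    D + (A * !![0, 1; c, 0] - !![0, 1; c, 0] * A) + (N * !![0, 0; 1, 0] - !![0, 0; 1, 0] * N) = 0 ↔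
      D 0 0 + c * A 0 1 - A 1 0 + N 0 1 = 0 ∧ D 0 1 + A 0 0 - A 1 1 = 0 ∧
        D 1 0 + c * (A 1 1 - A 0 0) + N 1 1 - N 0 0 = 0 ∧ D 1 1 + A 1 0 - c * A 0 1 - N 0 1 = 0 := by
  simp only [← Matrix.ext_iff, Fin.forall_fin_two]
  simp [mul_apply, vecMul, dotProduct, Fin.sum_univ_two]
  ring_nf
  tauto

theorem zeroCurvature_fin_two_of_trace_eq_zero {R : Type*} [CommRing R]
    {D A N : Matrix (Fin 2) (Fin 2) R} {c : R}
    (h : D + (A * !![0, 1; c, 0] - !![0, 1; c, 0] * A)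
      + (N * !![0, 0; 1, 0] - !![0, 0; 1, 0] * N) = 0)
    (hA : trace A = 0) (hN : trace N = 0) :
    D 0 1 = -2 * A 0 0 ∧ A = !![A 0 0, A 0 1; D 0 0 + c * A 0 1 + N 0 1, -A 0 0] ∧
      D 1 0 - 2 * c * A 0 0 - 2 * N 0 0 = 0 := by
  obtain ⟨h00, h01, h10, -⟩ := (zeroCurvature_fin_two_iff D A N c).mp h
  rw [trace_fin_two] at hA hN
  refine ⟨by linear_combination h01 + hA, ?_, by linear_combination h10 - c * hA - hN⟩
  have h10_eq : A 1 0 = D 0 0 + c * A 0 1 + N 0 1 := by linear_combination -h00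
  have h11_eq : A 1 1 = -A 0 0 := by linear_combination hA
  conv_lhs => rw [eta_fin_two A, h10_eq, h11_eq]

theorem hasDerivAt_deriv_of_eqOn {𝕜 F : Type*} [NontriviallyNormedField 𝕜] [NormedAddCommGroup F]
    [NormedSpace 𝕜 F] {f g : 𝕜 → F} {s : Set 𝕜} {x : 𝕜} (hs : IsOpen s)
    (hfg : Set.EqOn (deriv f) g s) (hx : x ∈ s) (hg : DifferentiableAt 𝕜 g x) :
    HasDerivAt (deriv f) (deriv g x) x :=
  hg.hasDerivAt.congr_of_eventuallyEq (Filter.eventuallyEq_of_mem (hs.mem_nhds hx) hfg)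

theorem lax_pair_zero_curvature_structure (I : Set ℝ) (hIopen : IsOpen I)
    (k : ℕ)
    (a : ℝ → ℂ)
    (A : ℕ → ℝ → Matrix (Fin 2) (Fin 2) ℂ)
    (hA : ∀ j, 1 ≤ j → j ≤ k + 1 → ∀ p q : Fin 2, ∀ l ∈ I,
      DifferentiableAt ℝ (fun t => A j t p q) l)
    (htr : ∀ j, 1 ≤ j → j ≤ k + 1 → ∀ l ∈ I, Matrix.trace (A j l) = 0)
    (hAk2 : A (k + 2) = fun _ => 0)
    (hzc : ∀ j, 1 ≤ j → j ≤ k + 1 → ∀ l ∈ I,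
      (Matrix.of fun p q : Fin 2 => deriv (fun t => A j t p q) l)
        + (A j l * !![0, 1; 2 * deriv a l, 0] - !![0, 1; 2 * deriv a l, 0] * A j l)
        + (A (j + 1) l * !![0, 0; 1, 0] - !![0, 0; 1, 0] * A (j + 1) l) = 0) :
    ∀ j, 1 ≤ j → j ≤ k + 1 → ∀ l ∈ I,
      -- (i) b_j' = −2 (A_j)₁₁, and in particular b_j is twice differentiable
      (deriv (fun t => A j t 0 1) l = -2 * A j l 0 0 ∧
        DifferentiableAt ℝ (fun t => A j t 0 1) l ∧
        DifferentiableAt ℝ (deriv (fun t => A j t 0 1)) l) ∧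
      -- (ii) the entries of A_j in terms of b_j, b_{j+1} and a'
      A j l = !![-(deriv (fun t => A j t 0 1) l) / 2, A j l 0 1;
          -(deriv (deriv (fun t => A j t 0 1)) l) / 2
            + 2 * deriv a l * A j l 0 1 + A (j + 1) l 0 1,
          deriv (fun t => A j t 0 1) l / 2] ∧
      -- (iii) (A_j)₂₁' − 4a'(A_j)₁₁ + b_{j+1}' = 0
      deriv (fun t => A j t 1 0) l - 4 * deriv a l * A j l 0 0
        + deriv (fun t => A (j + 1) t 0 1) l = 0 := by
  have htr_succ : ∀ j, 1 ≤ j → j ≤ k + 1 → ∀ l ∈ I, trace (A (j + 1) l) = 0 := by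
    intro j hj1 hj2 l hl
    rcases hj2.lt_or_eq with hj | rfl
    · exact htr (j + 1) (by omega) hj l hl
    · simp [hAk2]
  have hentries j hj1 hj2 l hl := zeroCurvature_fin_two_of_trace_eq_zero (hzc j hj1 hj2 l hl)
    (htr j hj1 hj2 l hl) (htr_succ j hj1 hj2 l hl)
  simp only [of_apply] at hentries
  intro j hj1 hj2 l hl
  obtain ⟨hb', hAj, h10⟩ := hentries j hj1 hj2 l hl
  have hb'' : HasDerivAt (deriv fun t => A j t 0 1) (-2 * deriv (fun t => A j t 0 0) l) l := by
    simpa using hasDerivAt_deriv_of_eqOn hIopen (fun x hx => (hentries j hj1 hj2 x hx).1) hl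
      ((hA j hj1 hj2 0 0 l hl).const_mul (-2))
  have hb'_succ : deriv (fun t => A (j + 1) t 0 1) l = -2 * A (j + 1) l 0 0 := by
    rcases hj2.lt_or_eq with hj | rfl
    · exact (hentries (j + 1) (by omega) hj l hl).1
    · simp [hAk2]
  refine ⟨⟨hb', hA j hj1 hj2 0 1 l hl, hb''.differentiableAt⟩, ?_, ?_⟩
  · conv_lhs => rw [hAj]
    rw [hb''.deriv, hb']
    ring_nf
  · rw [hb'_succ]
    linear_combination h10
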